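/- arXiv:math/0401322 — 2 statements merged into one kernel-verified Lean document; each statement's English description precedes it below -/
import Mathlib

section
/- Let H̃ be an affine Hecke algebra associated to a lattice L with Q ⊆ L ⊆ P for a reduced root system R with Weyl group W. Then the center of H̃ is Z(H̃) = C[X]^W, the W-invariant elements of the commutative subalgebra C[X] = span{X^λ : λ ∈ L}. In particular, any central element z = ∑ c_{λ,w} X^λ T_w has c_{λ,w} = 0 unless w = 1, and satisfies s_i z = z for all simple reflections s_i. -/
/-!
Central elements are detected by their coordinates in the basis `X^λ T_w`. Modulo basis vectors
`X^ν T_v` with `ℓ(v) < ℓ(w)` one has `T_w X^μ ≡ X^{wμ} T_w`, so if a central `z` had a nonzero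
coordinate at some `(λ, w)` with `w ≠ 1` and `ℓ(w)` maximal, comparing `X^μ z` with `z X^μ`
would repeat that coordinate at every `(λ + μ - wμ, w)`, infinitely many points. Hence
`z ∈ ℂ[X]`; comparing the coordinates of `T_{sᵢ} z = z T_{sᵢ}` at `X^λ T_{sᵢ}` shows that they are
`W`-invariant, and averaging over the finite group `W` writes `z` through orbit sums.
Conversely an orbit sum commutes with `ℂ[X]`, and with each `T_{sᵢ}` because the Bernstein
correction terms `(X^λ - X^{sᵢλ}) / (1 - X^{-αᵢ})` are anti-invariant under `sᵢ`, so they cancel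
over the orbit.
-/

namespace CoxeterSystem

variable {B : Type*} {M : CoxeterMatrix B} {W : Type*} [Group W] (cs : CoxeterSystem M W)

theorem induction_on_reduced_left {p : W → Prop} (w : W) (one : p 1)
    (mul : ∀ w i, cs.length (cs.simple i * w) = cs.length w + 1 → p w → p (cs.simple i * w)) :
    p w := by
  induction h : cs.length w using Nat.strong_induction_on generalizing w with
  | _ n ih =>
    rcases eq_or_ne w 1 with rfl | hw
    · exact one
    obtain ⟨i, hi⟩ := cs.exists_leftDescent_of_ne_one hw
    have hlen := cs.isLeftDescent_iff.mp hi
    have hw' : cs.simple i * (cs.simple i * w) = w := by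
      rw [← mul_assoc, cs.simple_mul_simple_self, one_mul]
    have key := mul (cs.simple i * w) i (by rw [hw']; omega) (ih _ (by omega) _ rfl)
    rwa [hw'] at key

theorem smul_invariant_of_simple {L α : Type*} [MulAction W L] {f : L → α}
    (hf : ∀ i l, f (cs.simple i • l) = f l) (w : W) (l : L) : f (w • l) = f l := by
  induction w using cs.simple_induction_left generalizing l with
  | one => rw [one_smul]
  | mul_simple_left w i ih => rw [mul_smul, hf, ih]

end CoxeterSystem

section BernsteinQuotient

variable {L : Type*} [AddCommGroup L]

theorem coroot_apply_reflect {a : L} {a' : L →+ ℤ} (ha : a' a = 2) (l : L) :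
    a' (l - a' l • a) = -a' l := by
  rw [map_sub, map_zsmul, ha, smul_eq_mul]
  ring

variable {H : Type*} [AddCommGroup H]

/-- `(X^l - X^{l - ⟨l, a'⟩ a}) / (1 - X^{-a})`, written as a geometric sum. -/
def bernsteinQuotient (X : L → H) (a : L) (a' : L →+ ℤ) (l : L) : H :=
  if 0 ≤ a' l then ∑ j ∈ Finset.range (a' l).toNat, X (l - (j : ℤ) • a)
  else -∑ j ∈ Finset.range (-(a' l)).toNat, X (l + ((j : ℤ) + 1) • a)

variable (X : L → H) {a : L} {a' : L →+ ℤ}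

theorem bernsteinQuotient_reflect_of_nonneg (ha : a' a = 2) {l : L} (hl : 0 ≤ a' l) :
    bernsteinQuotient X a a' (l - a' l • a) = -bernsteinQuotient X a a' l := by
  obtain ⟨n, hn⟩ := Int.eq_ofNat_of_zero_le hl
  have hrefl : a' (l - a' l • a) = -n := by rw [coroot_apply_reflect ha, hn]
  rcases Nat.eq_zero_or_pos n with rfl | hpos
  · simp [bernsteinQuotient, hn]
  rw [bernsteinQuotient, bernsteinQuotient, hrefl, hn, if_neg (by omega), if_pos (by omega)]
  simp only [neg_neg, Int.toNat_natCast]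
  rw [← Finset.sum_range_reflect]
  refine congrArg _ (Finset.sum_congr rfl fun j hj => congrArg X ?_)
  have hj : j < n := Finset.mem_range.mp hj
  rw [Nat.cast_sub (by omega), Nat.cast_sub (by omega)]
  module

theorem bernsteinQuotient_reflect (ha : a' a = 2) (l : L) :
    bernsteinQuotient X a a' (l - a' l • a) = -bernsteinQuotient X a a' l := by
  rcases le_or_gt 0 (a' l) with hl | hl
  · exact bernsteinQuotient_reflect_of_nonneg X ha hl
  · have h := bernsteinQuotient_reflect_of_nonneg X ha (l := l - a' l • a)
      (by rw [coroot_apply_reflect ha]; omega)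
    rw [coroot_apply_reflect ha, neg_smul, sub_neg_eq_add, sub_add_cancel] at h
    rw [h, neg_neg]

theorem bernsteinQuotient_mem_span (R : Type*) [Ring R] [Module R H] (a : L) (a' : L →+ ℤ)
    (l : L) : bernsteinQuotient X a a' l ∈ Submodule.span R (Set.range X) := by
  unfold bernsteinQuotient
  split
  · exact sum_mem fun j _ => Submodule.subset_span ⟨_, rfl⟩
  · exact neg_mem (sum_mem fun j _ => Submodule.subset_span ⟨_, rfl⟩)

end BernsteinQuotient

section OrbitSums

variable {W L : Type*} [Group W] [Fintype W] [MulAction W L]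

theorem sum_apply_smul_eq_zero_of_apply_smul_eq_neg {V : Type*} [AddCommGroup V]
    [IsAddTorsionFree V] {F : L → V} {s : W} (hF : ∀ l, F (s • l) = -F l) (l : L) :
    ∑ w : W, F (w • l) = 0 :=
  self_eq_neg.mp <| calc
    ∑ w : W, F (w • l) = ∑ w : W, F ((s * w) • l) :=
      (Equiv.sum_comp (Equiv.mulLeft s) fun w => F (w • l)).symm
    _ = -∑ w : W, F (w • l) := by simp only [mul_smul, hF, Finset.sum_neg_distrib]

theorem linearCombination_mem_span_orbitSum {K V : Type*} [Field K] [CharZero K] [AddCommGroup V]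
    [Module K V] (X : L → V) {f : L →₀ K} (hf : ∀ (w : W) l, f (w • l) = f l) :
    Finsupp.linearCombination K X f ∈ Submodule.span K {v | ∃ l, v = ∑ w : W, X (w • l)} := by
  have htranslate : ∀ w : W,
      Finsupp.linearCombination K (fun l => X (w • l)) f = Finsupp.linearCombination K X f := by
    intro w
    have hmap : Finsupp.mapDomain (MulAction.toPerm w) f = f := by
      ext l
      rw [Finsupp.mapDomain_equiv_apply]
      exact hf w⁻¹ l
    calc Finsupp.linearCombination K (fun l => X (w • l)) f
        = Finsupp.linearCombination K (X ∘ MulAction.toPerm w) f := rfl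
      _ = Finsupp.linearCombination K X f := by
        rw [← Finsupp.linearCombination_mapDomain, hmap]
  have havg : (Fintype.card W : K) • Finsupp.linearCombination K X f =
      Finsupp.linearCombination K (fun l => ∑ w : W, X (w • l)) f :=
    calc (Fintype.card W : K) • Finsupp.linearCombination K X f
        = ∑ w : W, Finsupp.linearCombination K (fun l => X (w • l)) f := by
          rw [Nat.cast_smul_eq_nsmul, ← Finset.card_univ, ← Finset.sum_const]
          exact Finset.sum_congr rfl fun w _ => (htranslate w).symm
      _ = Finsupp.linearCombination K (fun l => ∑ w : W, X (w • l)) f := by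
          simp only [Finsupp.linearCombination_apply, Finsupp.sum, Finset.smul_sum]
          exact Finset.sum_comm
  have hmem : Finsupp.linearCombination K (fun l => ∑ w : W, X (w • l)) f ∈
      Submodule.span K {v | ∃ l, v = ∑ w : W, X (w • l)} :=
    Finsupp.mem_span_range_iff_exists_finsupp.mpr ⟨f, rfl⟩ |> Submodule.span_mono
      (by rintro _ ⟨l, rfl⟩; exact ⟨l, rfl⟩)
  rw [← inv_smul_smul₀ (Nat.cast_ne_zero.mpr Fintype.card_ne_zero : (Fintype.card W : K) ≠ 0)
    (Finsupp.linearCombination K X f), havg]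
  exact Submodule.smul_mem _ _ hmem

end OrbitSums

theorem mem_center_of_commute_basis {ι R A : Type*} [CommSemiring R] [Semiring A] [Algebra R A]
    (b : Module.Basis ι R A) {z : A} (hz : ∀ i, Commute z (b i)) : z ∈ Set.center A := by
  refine Semigroup.mem_center_iff.mpr fun g => LinearMap.congr_fun
    (b.ext (f₁ := LinearMap.mulRight R z) (f₂ := LinearMap.mulLeft R z) fun i => ?_) g
  exact (hz i).symm.eq

namespace AffineHecke

section Generators

variable {B : Type*} {M : CoxeterMatrix B} {W : Type*} [Group W] (cs : CoxeterSystem M W)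
  {L : Type*} [MulAction W L] {H : Type*} [Ring H] {X : L → H} {T : W → H}

theorem T_simple_mul
    (hTmul : ∀ w w', cs.length (w * w') = cs.length w + cs.length w' → T (w * w') = T w * T w')
    {w : W} {i : B} (hw : cs.length (cs.simple i * w) = cs.length w + 1) :
    T (cs.simple i * w) = T (cs.simple i) * T w :=
  hTmul _ _ (by rw [cs.length_simple]; omega)

theorem commute_T_of_commute_T_simple (hT1 : T 1 = 1)
    (hTmul : ∀ w w', cs.length (w * w') = cs.length w + cs.length w' → T (w * w') = T w * T w')
    {z : H} (hz : ∀ i, Commute z (T (cs.simple i))) (w : W) : Commute z (T w) := by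
  induction w using cs.induction_on_reduced_left with
  | one => rw [hT1]; exact Commute.one_right z
  | mul w i hw ih => rw [T_simple_mul cs hTmul hw]; exact (hz i).mul_right ih

theorem T_simple_mul_X_sub_mem {R : Type*} [CommRing R] [Algebra R H]
    (hBern : ∀ i l, X l * T (cs.simple i) - T (cs.simple i) * X (cs.simple i • l) ∈
      Submodule.span R (Set.range X)) (i : B) (l : L) :
    T (cs.simple i) * X l - X (cs.simple i • l) * T (cs.simple i) ∈
      Submodule.span R (Set.range X) := by
  have h := neg_mem (hBern i (cs.simple i • l))
  rwa [← mul_smul, cs.simple_mul_simple_self, one_smul, neg_sub] at h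

end Generators

section Basis

variable {L W : Type*} [AddCommGroup L] {R : Type*} [CommRing R] {H : Type*} [Ring H] [Algebra R H]
  {b : Module.Basis (L × W) R H} {X : L → H} {T : W → H}

theorem X_mul_basis (hXadd : ∀ a a', X (a + a') = X a * X a') (hb : ∀ p, b p = X p.1 * T p.2)
    (ν : L) (p : L × W) : X ν * b p = b (ν + p.1, p.2) := by
  rw [hb, hb, hXadd, mul_assoc]

theorem repr_X_mul (hXadd : ∀ a a', X (a + a') = X a * X a') (hb : ∀ p, b p = X p.1 * T p.2)
    (μ : L) (h : H) (ν : L) (w : W) : b.repr (X μ * h) (μ + ν, w) = b.repr h (ν, w) := by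
  have hinj : Function.Injective (Prod.map (μ + ·) id : L × W → L × W) :=
    (add_right_injective μ).prodMap Function.injective_id
  refine LinearMap.congr_fun (b.ext (f₁ := Finsupp.lapply (μ + ν, w) ∘ₗ b.repr.toLinearMap ∘ₗ
    LinearMap.mulLeft R (X μ)) (f₂ := Finsupp.lapply (ν, w) ∘ₗ b.repr.toLinearMap) fun p => ?_) h
  simp only [LinearMap.comp_apply, LinearMap.mulLeft_apply, LinearEquiv.coe_coe,
    Finsupp.lapply_apply, X_mul_basis hXadd hb, b.repr_self]
  exact Finsupp.single_apply_left hinj p (ν, w) 1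

end Basis

section Filtration

variable {B : Type*} {M : CoxeterMatrix B} {W : Type*} [Group W] (cs : CoxeterSystem M W)
  {L : Type*} {R : Type*} [CommRing R] {H : Type*} [Ring H] [Algebra R H]
  (b : Module.Basis (L × W) R H) {X : L → H} {T : W → H}

def lengthFiltration (k : ℕ) : Submodule R H :=
  Submodule.span R (b '' {p | cs.length p.2 < k})

theorem lengthFiltration_mono : Monotone (lengthFiltration cs b) := fun _ _ hk =>
  Submodule.span_mono (Set.image_mono fun _ hp => lt_of_lt_of_le hp hk)

theorem basis_mem_lengthFiltration {p : L × W} {k : ℕ} (hp : cs.length p.2 < k) :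
    b p ∈ lengthFiltration cs b k :=
  Submodule.subset_span ⟨p, hp, rfl⟩

theorem repr_eq_zero_of_mem_lengthFiltration {h : H} {k : ℕ} (hh : h ∈ lengthFiltration cs b k)
    {p : L × W} (hp : k ≤ cs.length p.2) : b.repr h p = 0 :=
  Finsupp.notMem_support_iff.mp fun hmem =>
    (b.repr_support_subset_of_mem_span _ hh hmem).not_ge hp

variable {b}

theorem basis_one (hb : ∀ p, b p = X p.1 * T p.2) (hT1 : T 1 = 1) (l : L) : b (l, 1) = X l := by
  rw [hb, hT1, mul_one]

theorem span_X_le_lengthFiltration_one (hb : ∀ p, b p = X p.1 * T p.2) (hT1 : T 1 = 1) :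
    Submodule.span R (Set.range X) ≤ lengthFiltration cs b 1 := by
  refine Submodule.span_le.mpr ?_
  rintro _ ⟨l, rfl⟩
  rw [← basis_one hb hT1]
  exact basis_mem_lengthFiltration cs b (p := (l, 1)) (by simp)

theorem mul_T_mem_lengthFiltration (hb : ∀ p, b p = X p.1 * T p.2) {h : H}
    (hh : h ∈ Submodule.span R (Set.range X)) (w : W) :
    h * T w ∈ lengthFiltration cs b (cs.length w + 1) := by
  refine (Submodule.span_le (p := (lengthFiltration cs b _).comap (LinearMap.mulRight R (T w)))).mpr
    ?_ hh
  rintro _ ⟨l, rfl⟩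
  show X l * T w ∈ lengthFiltration cs b (cs.length w + 1)
  rw [← hb (l, w)]
  exact basis_mem_lengthFiltration cs b (p := (l, w)) (Nat.lt_succ_self _)

theorem repr_mul_T_of_mem_span_X (hb : ∀ p, b p = X p.1 * T p.2) (hT1 : T 1 = 1) {h : H}
    (hh : h ∈ Submodule.span R (Set.range X)) (ν : L) (w : W) :
    b.repr (h * T w) (ν, w) = b.repr h (ν, 1) := by
  refine LinearMap.eqOn_span' (f := Finsupp.lapply (ν, w) ∘ₗ b.repr.toLinearMap ∘ₗ
    LinearMap.mulRight R (T w)) (g := Finsupp.lapply (ν, 1) ∘ₗ b.repr.toLinearMap) ?_ hh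
  rintro _ ⟨l, rfl⟩
  simp only [LinearMap.comp_apply, LinearMap.mulRight_apply, LinearEquiv.coe_coe,
    Finsupp.lapply_apply]
  rw [← hb (l, w), ← basis_one hb hT1, b.repr_self, b.repr_self]
  exact (Finsupp.single_apply_left (Prod.mk_left_injective w) l ν 1).trans
    (Finsupp.single_apply_left (Prod.mk_left_injective 1) l ν 1).symm

theorem exists_linearCombination_X_eq (hb : ∀ p, b p = X p.1 * T p.2) (hT1 : T 1 = 1) {z : H}
    (hz : ∀ p : L × W, p.2 ≠ 1 → b.repr z p = 0) :
    ∃ f : L →₀ R, (∀ l, f l = b.repr z (l, 1)) ∧ Finsupp.linearCombination R X f = z := by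
  have hsupp : ↑(b.repr z).support ⊆ Set.range fun l : L => (l, (1 : W)) := fun p hp =>
    ⟨p.1, Prod.ext rfl (not_not.mp fun h => Finsupp.mem_support_iff.mp hp (hz p h)).symm⟩
  refine ⟨Finsupp.comapDomain _ (b.repr z) (Prod.mk_left_injective 1).injOn, fun l => rfl, ?_⟩
  have hX : X = b ∘ fun l => (l, 1) := funext fun l => (basis_one hb hT1 l).symm
  rw [hX, ← Finsupp.linearCombination_mapDomain,
    Finsupp.mapDomain_comapDomain _ (Prod.mk_left_injective 1) _ hsupp, b.linearCombination_repr]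

theorem X_mul_T_simple_mul_T_mem_lengthFiltration (hb : ∀ p, b p = X p.1 * T p.2)
    (hTmul : ∀ w w', cs.length (w * w') = cs.length w + cs.length w' → T (w * w') = T w * T w')
    {c : R} (hquad : ∀ i, T (cs.simple i) * T (cs.simple i) = c • T (cs.simple i) + 1)
    (l : L) (i : B) (w : W) :
    X l * (T (cs.simple i) * T w) ∈ lengthFiltration cs b (cs.length w + 2) := by
  have hmem : ∀ v : W, cs.length v < cs.length w + 2 →
      X l * T v ∈ lengthFiltration cs b (cs.length w + 2) := fun v hv => by
    rw [← hb (l, v)]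
    exact basis_mem_lengthFiltration cs b (p := (l, v)) hv
  rcases cs.length_simple_mul w i with hlen | hlen
  · rw [← T_simple_mul cs hTmul hlen]
    exact hmem _ (by omega)
  · -- `w = sᵢ v` with `ℓ(w) = ℓ(v) + 1`, so `Tᵢ T_w = Tᵢ² T_v = c T_w + T_v`.
    set v := cs.simple i * w
    have hwv : cs.simple i * v = w := by simp [v, ← mul_assoc]
    have hTw : T w = T (cs.simple i) * T v := by
      rw [← T_simple_mul cs hTmul (by rw [hwv]; omega), hwv]
    have hTT : T (cs.simple i) * T w = c • T w + T v := by
      rw [hTw, ← mul_assoc, hquad, add_mul, one_mul, smul_mul_assoc]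
    rw [hTT, mul_add, mul_smul_comm]
    exact add_mem (Submodule.smul_mem _ _ (hmem _ (by omega))) (hmem _ (by omega))

variable [MulAction W L]

theorem T_simple_mul_mem_lengthFiltration (hb : ∀ p, b p = X p.1 * T p.2)
    (hTmul : ∀ w w', cs.length (w * w') = cs.length w + cs.length w' → T (w * w') = T w * T w')
    {c : R} (hquad : ∀ i, T (cs.simple i) * T (cs.simple i) = c • T (cs.simple i) + 1)
    (hBern : ∀ i l, X l * T (cs.simple i) - T (cs.simple i) * X (cs.simple i • l) ∈
      Submodule.span R (Set.range X))
    (i : B) {k : ℕ} {h : H} (hh : h ∈ lengthFiltration cs b k) :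
    T (cs.simple i) * h ∈ lengthFiltration cs b (k + 1) := by
  refine (Submodule.span_le (p := (lengthFiltration cs b (k + 1)).comap
    (LinearMap.mulLeft R (T (cs.simple i))))).mpr ?_ hh
  rintro _ ⟨⟨l, w⟩, hw, rfl⟩
  have hw : cs.length w < k := hw
  have hsplit : T (cs.simple i) * b (l, w) =
      (T (cs.simple i) * X l - X (cs.simple i • l) * T (cs.simple i)) * T w +
        X (cs.simple i • l) * (T (cs.simple i) * T w) := by
    rw [hb]; noncomm_ring
  simp only [SetLike.mem_coe, Submodule.mem_comap, LinearMap.mulLeft_apply, hsplit]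
  exact add_mem
    (lengthFiltration_mono cs b (by omega)
      (mul_T_mem_lengthFiltration cs hb (T_simple_mul_X_sub_mem cs hBern i l) w))
    (lengthFiltration_mono cs b (by omega)
      (X_mul_T_simple_mul_T_mem_lengthFiltration cs hb hTmul hquad _ i w))

theorem T_mul_X_sub_mem_lengthFiltration (hb : ∀ p, b p = X p.1 * T p.2) (hT1 : T 1 = 1)
    (hTmul : ∀ w w', cs.length (w * w') = cs.length w + cs.length w' → T (w * w') = T w * T w')
    {c : R} (hquad : ∀ i, T (cs.simple i) * T (cs.simple i) = c • T (cs.simple i) + 1)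
    (hBern : ∀ i l, X l * T (cs.simple i) - T (cs.simple i) * X (cs.simple i • l) ∈
      Submodule.span R (Set.range X))
    (w : W) (l : L) : T w * X l - X (w • l) * T w ∈ lengthFiltration cs b (cs.length w) := by
  induction w using cs.induction_on_reduced_left with
  | one => simp [hT1]
  | mul w i hw ih =>
    have hsplit : T (cs.simple i * w) * X l - X ((cs.simple i * w) • l) * T (cs.simple i * w) =
        T (cs.simple i) * (T w * X l - X (w • l) * T w) +
          (T (cs.simple i) * X (w • l) - X (cs.simple i • w • l) * T (cs.simple i)) * T w := by
      rw [T_simple_mul cs hTmul hw, mul_smul]; noncomm_ring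
    rw [hsplit, hw]
    exact add_mem (T_simple_mul_mem_lengthFiltration cs hb hTmul hquad hBern i ih)
      (mul_T_mem_lengthFiltration cs hb (T_simple_mul_X_sub_mem cs hBern i _) w)

theorem repr_T_simple_mul_of_mem_span_X (hb : ∀ p, b p = X p.1 * T p.2) (hT1 : T 1 = 1)
    (hBern : ∀ i l, X l * T (cs.simple i) - T (cs.simple i) * X (cs.simple i • l) ∈
      Submodule.span R (Set.range X))
    {h : H} (hh : h ∈ Submodule.span R (Set.range X)) (i : B) (ν : L) :
    b.repr (T (cs.simple i) * h) (ν, cs.simple i) = b.repr h (cs.simple i • ν, 1) := by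
  refine LinearMap.eqOn_span' (f := Finsupp.lapply (ν, cs.simple i) ∘ₗ b.repr.toLinearMap ∘ₗ
    LinearMap.mulLeft R (T (cs.simple i)))
    (g := Finsupp.lapply (cs.simple i • ν, 1) ∘ₗ b.repr.toLinearMap) ?_ hh
  rintro _ ⟨l, rfl⟩
  simp only [LinearMap.comp_apply, LinearMap.mulLeft_apply, LinearEquiv.coe_coe,
    Finsupp.lapply_apply]
  have hlow := repr_eq_zero_of_mem_lengthFiltration cs b
    (span_X_le_lengthFiltration_one cs hb hT1 (T_simple_mul_X_sub_mem cs hBern i l))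
    (p := (ν, cs.simple i)) (by simp)
  rw [← add_sub_cancel (X (cs.simple i • l) * T (cs.simple i)) (T (cs.simple i) * X l), map_add,
    Finsupp.add_apply, hlow, add_zero,
    repr_mul_T_of_mem_span_X hb hT1 (Submodule.subset_span ⟨_, rfl⟩), ← basis_one hb hT1,
    ← basis_one hb hT1, b.repr_self, b.repr_self]
  have hinj : Function.Injective fun x : L => (cs.simple i • x, (1 : W)) :=
    (Prod.mk_left_injective 1).comp (MulAction.injective _)
  have hν : (ν, (1 : W)) = (cs.simple i • cs.simple i • ν, 1) := by
    rw [smul_smul, cs.simple_mul_simple_self, one_smul]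
  rw [hν]
  exact (Finsupp.single_apply_left hinj l _ 1).trans
    (Finsupp.single_apply_left (Prod.mk_left_injective 1) l _ 1).symm

theorem repr_simple_smul_of_mem_center (hb : ∀ p, b p = X p.1 * T p.2) (hT1 : T 1 = 1)
    (hBern : ∀ i l, X l * T (cs.simple i) - T (cs.simple i) * X (cs.simple i • l) ∈
      Submodule.span R (Set.range X))
    {z : H} (hz : z ∈ Set.center H) (hzX : z ∈ Submodule.span R (Set.range X)) (i : B) (ν : L) :
    b.repr z (cs.simple i • ν, 1) = b.repr z (ν, 1) := by
  rw [← repr_T_simple_mul_of_mem_span_X cs hb hT1 hBern hzX, Semigroup.mem_center_iff.mp hz,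
    repr_mul_T_of_mem_span_X hb hT1 hzX]

end Filtration

section Coefficients

variable {B : Type*} {M : CoxeterMatrix B} {W : Type*} [Group W] (cs : CoxeterSystem M W)
  {L : Type*} [AddCommGroup L] {R : Type*} [CommRing R] {H : Type*} [Ring H] [Algebra R H]
  {b : Module.Basis (L × W) R H} {X : L → H} {T : W → H}

theorem X_mul_mem_lengthFiltration (hXadd : ∀ a a', X (a + a') = X a * X a')
    (hb : ∀ p, b p = X p.1 * T p.2) (ν : L) {k : ℕ} {h : H} (hh : h ∈ lengthFiltration cs b k) :
    X ν * h ∈ lengthFiltration cs b k := by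
  refine (Submodule.span_le (p := (lengthFiltration cs b k).comap (LinearMap.mulLeft R (X ν)))).mpr
    ?_ hh
  rintro _ ⟨p, hp, rfl⟩
  simp only [SetLike.mem_coe, Submodule.mem_comap, LinearMap.mulLeft_apply, X_mul_basis hXadd hb]
  exact basis_mem_lengthFiltration cs b hp

variable [MulAction W L]

theorem repr_mul_X_of_mem_lengthFiltration (hXadd : ∀ a a', X (a + a') = X a * X a')
    (hb : ∀ p, b p = X p.1 * T p.2) (hT1 : T 1 = 1)
    (hTmul : ∀ w w', cs.length (w * w') = cs.length w + cs.length w' → T (w * w') = T w * T w')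
    {c : R} (hquad : ∀ i, T (cs.simple i) * T (cs.simple i) = c • T (cs.simple i) + 1)
    (hBern : ∀ i l, X l * T (cs.simple i) - T (cs.simple i) * X (cs.simple i • l) ∈
      Submodule.span R (Set.range X))
    {w : W} {h : H} (hh : h ∈ lengthFiltration cs b (cs.length w + 1)) (μ ν : L) :
    b.repr (h * X μ) (ν + w • μ, w) = b.repr h (ν, w) := by
  have hinj : Function.Injective fun p : L × W => (p.1 + p.2 • μ, p.2) := by
    rintro ⟨l, v⟩ ⟨l', v'⟩ h
    obtain ⟨h1, rfl⟩ := Prod.mk.inj h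
    simpa using h1
  refine LinearMap.eqOn_span' (f := Finsupp.lapply (ν + w • μ, w) ∘ₗ b.repr.toLinearMap ∘ₗ
    LinearMap.mulRight R (X μ)) (g := Finsupp.lapply (ν, w) ∘ₗ b.repr.toLinearMap) ?_ hh
  rintro _ ⟨p, hp, rfl⟩
  have hsplit : b p * X μ =
      b (p.1 + p.2 • μ, p.2) + X p.1 * (T p.2 * X μ - X (p.2 • μ) * T p.2) := by
    rw [hb, hb, hXadd]; noncomm_ring
  have hlow : b.repr (X p.1 * (T p.2 * X μ - X (p.2 • μ) * T p.2)) (ν + w • μ, w) = 0 :=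
    repr_eq_zero_of_mem_lengthFiltration cs b (X_mul_mem_lengthFiltration cs hXadd hb _
      (T_mul_X_sub_mem_lengthFiltration cs hb hT1 hTmul hquad hBern _ _)) (Nat.lt_succ_iff.mp hp)
  simp only [LinearMap.comp_apply, LinearMap.mulRight_apply, LinearEquiv.coe_coe,
    Finsupp.lapply_apply, hsplit, map_add, hlow, add_zero, b.repr_self]
  exact Finsupp.single_apply_left hinj p (ν, w) 1

theorem repr_add_sub_smul_of_mem_center (hXadd : ∀ a a', X (a + a') = X a * X a')
    (hb : ∀ p, b p = X p.1 * T p.2) (hT1 : T 1 = 1)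
    (hTmul : ∀ w w', cs.length (w * w') = cs.length w + cs.length w' → T (w * w') = T w * T w')
    {c : R} (hquad : ∀ i, T (cs.simple i) * T (cs.simple i) = c • T (cs.simple i) + 1)
    (hBern : ∀ i l, X l * T (cs.simple i) - T (cs.simple i) * X (cs.simple i • l) ∈
      Submodule.span R (Set.range X))
    {z : H} (hz : z ∈ Set.center H) {w : W} (hzw : z ∈ lengthFiltration cs b (cs.length w + 1))
    (μ ν : L) : b.repr z (ν + (μ - w • μ), w) = b.repr z (ν, w) :=
  calc b.repr z (ν + (μ - w • μ), w)
      = b.repr (z * X μ) (ν + (μ - w • μ) + w • μ, w) :=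
        (repr_mul_X_of_mem_lengthFiltration cs hXadd hb hT1 hTmul hquad hBern hzw μ _).symm
    _ = b.repr (X μ * z) (μ + ν, w) := by
        rw [Semigroup.mem_center_iff.mp hz (X μ)]
        congr 2
        abel
    _ = b.repr z (ν, w) := repr_X_mul hXadd hb μ z ν w

theorem repr_eq_zero_of_mem_center (hXadd : ∀ a a', X (a + a') = X a * X a')
    (hb : ∀ p, b p = X p.1 * T p.2) (hT1 : T 1 = 1)
    (hTmul : ∀ w w', cs.length (w * w') = cs.length w + cs.length w' → T (w * w') = T w * T w')
    {c : R} (hquad : ∀ i, T (cs.simple i) * T (cs.simple i) = c • T (cs.simple i) + 1)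
    (hBern : ∀ i l, X l * T (cs.simple i) - T (cs.simple i) * X (cs.simple i • l) ∈
      Submodule.span R (Set.range X))
    (hinf : ∀ w : W, w ≠ 1 → (Set.range fun μ : L => μ - w • μ).Infinite)
    {z : H} (hz : z ∈ Set.center H) {p : L × W} (hp : p.2 ≠ 1) : b.repr z p = 0 := by
  by_contra hne
  obtain ⟨p₀, hp₀, hmax⟩ := (b.repr z).support.exists_max_image (fun r => cs.length r.2)
    ⟨p, Finsupp.mem_support_iff.mpr hne⟩
  have hw₀ : p₀.2 ≠ 1 := by
    intro h1
    have hlen := hmax p (Finsupp.mem_support_iff.mpr hne)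
    rw [h1, cs.length_one, Nat.le_zero, cs.length_eq_zero_iff] at hlen
    exact hp hlen
  have hzw : z ∈ lengthFiltration cs b (cs.length p₀.2 + 1) :=
    Submodule.span_mono (Set.image_mono fun r hr => Nat.lt_succ_of_le (hmax r hr))
      (b.mem_span_repr_support z)
  have hsub : (fun x => (p₀.1 + x, p₀.2)) '' Set.range (fun μ : L => μ - p₀.2 • μ) ⊆
      (b.repr z).support := by
    rintro _ ⟨_, ⟨μ, rfl⟩, rfl⟩
    rw [Finset.mem_coe, Finsupp.mem_support_iff,
      repr_add_sub_smul_of_mem_center cs hXadd hb hT1 hTmul hquad hBern hz hzw]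
    exact Finsupp.mem_support_iff.mp hp₀
  have hinj : Function.Injective fun x : L => (p₀.1 + x, p₀.2) :=
    fun x y hxy => add_left_cancel (Prod.mk.inj hxy).1
  exact (((hinf _ hw₀).image hinj.injOn).mono hsub) (b.repr z).support.finite_toSet

end Coefficients

section Center

variable {B : Type*} {M : CoxeterMatrix B} {W : Type*} [Group W] [Fintype W]
  (cs : CoxeterSystem M W) {L : Type*} [AddCommGroup L] [MulAction W L] {R : Type*} [CommRing R]
  {H : Type*} [Ring H] [Algebra R H] [IsAddTorsionFree H] {X : L → H} {T : W → H}
  {α : B → L} {αv : B → L →+ ℤ}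

theorem commute_orbitSum_T_simple (hrefl : ∀ i l, cs.simple i • l = l - αv i l • α i)
    (hpair : ∀ i, αv i (α i) = 2) {c : R}
    (hBern : ∀ i l, X l * T (cs.simple i) =
      T (cs.simple i) * X (cs.simple i • l) + c • bernsteinQuotient X (α i) (αv i) l)
    (i : B) (μ : L) : Commute (∑ w : W, X (w • μ)) (T (cs.simple i)) := by
  have hvanish : ∑ w : W, bernsteinQuotient X (α i) (αv i) (w • μ) = 0 :=
    sum_apply_smul_eq_zero_of_apply_smul_eq_neg (s := cs.simple i)
      (fun l => by rw [hrefl]; exact bernsteinQuotient_reflect X (hpair i) l) μ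
  show (∑ w : W, X (w • μ)) * T (cs.simple i) = T (cs.simple i) * ∑ w : W, X (w • μ)
  calc (∑ w : W, X (w • μ)) * T (cs.simple i)
      = ∑ w : W, (T (cs.simple i) * X ((cs.simple i * w) • μ) +
          c • bernsteinQuotient X (α i) (αv i) (w • μ)) := by
        rw [Finset.sum_mul]
        exact Finset.sum_congr rfl fun w _ => by rw [hBern, mul_smul]
    _ = T (cs.simple i) * ∑ w : W, X ((cs.simple i * w) • μ) := by
        rw [Finset.sum_add_distrib, ← Finset.smul_sum, hvanish, smul_zero, add_zero,
          Finset.mul_sum]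
    _ = T (cs.simple i) * ∑ w : W, X (w • μ) :=
        congrArg _ (Equiv.sum_comp (Equiv.mulLeft (cs.simple i)) fun w => X (w • μ))

theorem orbitSum_mem_center {b : Module.Basis (L × W) R H}
    (hXadd : ∀ a a', X (a + a') = X a * X a') (hb : ∀ p, b p = X p.1 * T p.2) (hT1 : T 1 = 1)
    (hTmul : ∀ w w', cs.length (w * w') = cs.length w + cs.length w' → T (w * w') = T w * T w')
    (hrefl : ∀ i l, cs.simple i • l = l - αv i l • α i) (hpair : ∀ i, αv i (α i) = 2) {c : R}
    (hBern : ∀ i l, X l * T (cs.simple i) =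
      T (cs.simple i) * X (cs.simple i • l) + c • bernsteinQuotient X (α i) (αv i) l)
    (μ : L) : ∑ w : W, X (w • μ) ∈ Set.center H := by
  refine mem_center_of_commute_basis b fun p => ?_
  rw [hb]
  refine Commute.mul_right (Commute.sum_left _ _ _ fun w _ => ?_)
    (commute_T_of_commute_T_simple cs hT1 hTmul
      (commute_orbitSum_T_simple cs hrefl hpair hBern · μ) p.2)
  show X (w • μ) * X p.1 = X p.1 * X (w • μ)
  rw [← hXadd, ← hXadd, add_comm]

end Center

end AffineHecke

open AffineHecke

abbrev mulActionOfHom {W L : Type*} [Group W] [AddCommGroup L]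
    (σ : W →* Multiplicative (L ≃+ L)) : MulAction W L where
  smul w l := Multiplicative.toAdd (σ w) l
  one_smul l := by
    show Multiplicative.toAdd (σ 1) l = l
    rw [map_one]; rfl
  mul_smul u v l := by
    show Multiplicative.toAdd (σ (u * v)) l =
      Multiplicative.toAdd (σ u) (Multiplicative.toAdd (σ v) l)
    rw [map_mul]; rfl

theorem stmt12_general {B : Type*} (Mat : CoxeterMatrix B) {W : Type*} [Group W] [Fintype W]
    (cs : CoxeterSystem Mat W)
    {L : Type*} [AddCommGroup L]
    {H : Type*} [Ring H] [Algebra ℂ H]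
    (q : ℂ)
    (σ : W →* Multiplicative (L ≃+ L))
    (X : L → H) (T : W → H)
    (α : B → L) (αv : B → (L →+ ℤ))
    (hrefl : ∀ (i : B) (l : L), Multiplicative.toAdd (σ (cs.simple i)) l = l - αv i l • α i)
    (hpair : ∀ i : B, αv i (α i) = 2)
    (hXadd : ∀ a b : L, X (a + b) = X a * X b)
    (b : Module.Basis (L × W) ℂ H)
    (hb : ∀ lw : L × W, b lw = X lw.1 * T lw.2)
    (hT1 : T 1 = 1)
    (hTmul : ∀ w w' : W, cs.length (w * w') = cs.length w + cs.length w' →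
      T (w * w') = T w * T w')
    (hquad : ∀ i : B, T (cs.simple i) * T (cs.simple i) =
      (q - q⁻¹) • T (cs.simple i) + 1)
    (hBern : ∀ (i : B) (l : L),
      X l * T (cs.simple i) = T (cs.simple i) * X (Multiplicative.toAdd (σ (cs.simple i)) l) +
        (q - q⁻¹) •
          (if 0 ≤ αv i l then
            ∑ j ∈ Finset.range (αv i l).toNat, X (l - (j : ℤ) • α i)
          else
            -∑ j ∈ Finset.range (-(αv i l)).toNat, X (l + ((j : ℤ) + 1) • α i)))
    (hsep : ∀ w : W, w ≠ 1 →
      {x : L | ∃ μ : L, (∀ i, 0 ≤ αv i μ) ∧ x = μ - Multiplicative.toAdd (σ w) μ}.Infinite) :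
    Set.center H =
      ↑(Submodule.span ℂ {h : H | ∃ l : L, h = ∑ w : W, X (Multiplicative.toAdd (σ w) l)}) ∧
    (∀ z ∈ Set.center H, ∀ lw : L × W, lw.2 ≠ 1 → b.repr z lw = 0) ∧
    (∀ z ∈ Set.center H, ∀ (i : B) (l : L),
      b.repr z (Multiplicative.toAdd (σ (cs.simple i)) l, 1) = b.repr z (l, 1)) := by
  let _ : MulAction W L := mulActionOfHom σ
  have : IsAddTorsionFree H := .of_isTorsionFree ℂ H
  have hBern' : ∀ i l, X l * T (cs.simple i) = T (cs.simple i) * X (cs.simple i • l) +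
      (q - q⁻¹) • bernsteinQuotient X (α i) (αv i) l := hBern
  have hBernModX : ∀ i l, X l * T (cs.simple i) - T (cs.simple i) * X (cs.simple i • l) ∈
      Submodule.span ℂ (Set.range X) := fun i l => by
    rw [hBern' i l, add_sub_cancel_left]
    exact Submodule.smul_mem _ _ (bernsteinQuotient_mem_span X ℂ (α i) (αv i) l)
  have hinf : ∀ w : W, w ≠ 1 → (Set.range fun μ : L => μ - w • μ).Infinite := fun w hw =>
    (hsep w hw).mono (by rintro _ ⟨μ, -, rfl⟩; exact ⟨μ, rfl⟩)
  have hsupp : ∀ z ∈ Set.center H, ∀ p : L × W, p.2 ≠ 1 → b.repr z p = 0 := fun z hz _ =>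
    repr_eq_zero_of_mem_center cs hXadd hb hT1 hTmul hquad hBernModX hinf hz
  have hinv : ∀ z ∈ Set.center H, ∀ i l, b.repr z (cs.simple i • l, 1) = b.repr z (l, 1) := by
    intro z hz
    obtain ⟨f, -, hfz⟩ := exists_linearCombination_X_eq hb hT1 (hsupp z hz)
    exact repr_simple_smul_of_mem_center cs hb hT1 hBernModX hz
      (hfz ▸ Finsupp.mem_span_range_iff_exists_finsupp.mpr ⟨f, rfl⟩)
  refine ⟨subset_antisymm (fun z hz => ?_) ?_, hsupp, hinv⟩
  · obtain ⟨f, hf, rfl⟩ := exists_linearCombination_X_eq hb hT1 (hsupp z hz)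
    exact linearCombination_mem_span_orbitSum X
      (cs.smul_invariant_of_simple fun i l => by rw [hf, hf, hinv _ hz])
  · exact (Submodule.span_le (p := (Subalgebra.center ℂ H).toSubmodule)).mpr fun _ ⟨l, hl⟩ =>
      hl ▸ orbitSum_mem_center cs hXadd hb hT1 hTmul hrefl hpair hBern' l

/-- **Bernstein's theorem** (Theorem 4.12): the center of an affine Hecke algebra.

Let `R` be a reduced root system with Weyl group `W` (a Coxeter group with simple
reflections `cs.simple i`, acting on a lattice `L` with `Q ⊆ L ⊆ P` via `σ`, by
the reflection formula `sᵢ(l) = l - ⟨l, αᵢ^∨⟩ αᵢ`).  Let `H̃ = H̃_L` be the affine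
Hecke algebra of `L`: the `ℂ`-algebra with basis `{X^λ T_w : λ ∈ L, w ∈ W}`,
where `X : L → H̃` is multiplicative, `T` is multiplicative on reduced products,
the `T_{sᵢ}` satisfy the quadratic relation `T² = (q - q⁻¹)T + 1`, and the
Bernstein relation
`X^λ Tᵢ = Tᵢ X^{sᵢλ} + (q - q⁻¹) (X^λ - X^{sᵢλ})/(1 - X^{-αᵢ})` holds
(the last term written as the explicit geometric sum).  The hypotheses `hdom`
and `hsep` record that `L` contains enough dominant weights (true for any
`Q ⊆ L ⊆ P`).  Then the center of `H̃` is `ℂ[X]^W`, the `W`-invariants of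
`ℂ[X]` (spanned by the orbit sums `∑_{w ∈ W} X^{wλ}`); in particular every
central element `z = ∑ c_{λ,w} X^λ T_w` has `c_{λ,w} = 0` unless `w = 1`, and
its coefficients satisfy `c_{sᵢλ,1} = c_{λ,1}` for every simple reflection. -/
theorem stmt12 {B : Type*} (Mat : CoxeterMatrix B) {W : Type*} [Group W] [Fintype W]
    (cs : CoxeterSystem Mat W)
    {L : Type*} [AddCommGroup L]
    {H : Type*} [Ring H] [Algebra ℂ H]
    (q : ℂ) (hq : q ≠ 0)
    (σ : W →* Multiplicative (L ≃+ L))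
    (X : L → H) (T : W → H)
    (α : B → L) (αv : B → (L →+ ℤ))
    (hrefl : ∀ (i : B) (l : L), Multiplicative.toAdd (σ (cs.simple i)) l = l - αv i l • α i)
    (hpair : ∀ i : B, αv i (α i) = 2)
    (hX0 : X 0 = 1)
    (hXadd : ∀ a b : L, X (a + b) = X a * X b)
    (b : Module.Basis (L × W) ℂ H)
    (hb : ∀ lw : L × W, b lw = X lw.1 * T lw.2)
    (hT1 : T 1 = 1)
    (hTmul : ∀ w w' : W, cs.length (w * w') = cs.length w + cs.length w' →
      T (w * w') = T w * T w')
    (hquad : ∀ i : B, T (cs.simple i) * T (cs.simple i) =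
      (q - q⁻¹) • T (cs.simple i) + 1)
    (hBern : ∀ (i : B) (l : L),
      X l * T (cs.simple i) = T (cs.simple i) * X (Multiplicative.toAdd (σ (cs.simple i)) l) +
        (q - q⁻¹) •
          (if 0 ≤ αv i l then
            ∑ j ∈ Finset.range (αv i l).toNat, X (l - (j : ℤ) • α i)
          else
            -∑ j ∈ Finset.range (-(αv i l)).toNat, X (l + ((j : ℤ) + 1) • α i)))
    (hdom : ∀ l : L, ∃ μ ν : L, (∀ i, 0 ≤ αv i μ) ∧ (∀ i, 0 ≤ αv i ν) ∧ l = μ - ν)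
    (hsep : ∀ w : W, w ≠ 1 →
      {x : L | ∃ μ : L, (∀ i, 0 ≤ αv i μ) ∧ x = μ - Multiplicative.toAdd (σ w) μ}.Infinite) :
    Set.center H =
      ↑(Submodule.span ℂ {h : H | ∃ l : L, h = ∑ w : W, X (Multiplicative.toAdd (σ w) l)}) ∧
    (∀ z ∈ Set.center H, ∀ lw : L × W, lw.2 ≠ 1 → b.repr z lw = 0) ∧
    (∀ z ∈ Set.center H, ∀ (i : B) (l : L),
      b.repr z (Multiplicative.toAdd (σ (cs.simple i)) l, 1) = b.repr z (l, 1)) :=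
  stmt12_general Mat cs q σ X T α αv hrefl hpair hXadd b hb hT1 hTmul hquad hBern hsep
end

section
/- Let ρ : H(G_2) → End(C^2) be given by ρ(T_1) = diag(q, −q^{-1}) and ρ(T_2) = (1/(q+q^{-1})) [[2−q^{-2}, q^2−1+q^{-2}],[3, q^2−2]]. Assume q ∈ C* is such that q + q^{-1} ≠ 0 and q^2 ≠ 1. Then there exists no 2×2 matrix N satisfying simultaneously: N^2 = (q−q^{-1})N + I, N ρ(T_2) N = ρ(T_2) N ρ(T_2), and N ρ(T_1) = ρ(T_1) N. -/
/-- The 2-dimensional irreducible representation `ρ` of the Iwahori–Hecke algebra of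
type `G₂`, given by `ρ(T₁) = diag(q, -q⁻¹)` and
`ρ(T₂) = (q+q⁻¹)⁻¹ • [[2-q⁻², q²-1+q⁻²],[3, q²-2]]`, does not extend to the affine
Hecke algebra: there is no `2 × 2` matrix `N` with `N² = (q-q⁻¹)N + 1`,
`N ρ(T₂) N = ρ(T₂) N ρ(T₂)` and `N ρ(T₁) = ρ(T₁) N`. -/
theorem stmt15 (q : ℂ) (hq : q ≠ 0) (hq1 : q + q⁻¹ ≠ 0) (hq2 : q ^ 2 ≠ 1) :
    ¬ ∃ N : Matrix (Fin 2) (Fin 2) ℂ,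
      N * N = (q - q⁻¹) • N + 1 ∧
      N * ((q + q⁻¹)⁻¹ • !![2 - q⁻¹ ^ 2, q ^ 2 - 1 + q⁻¹ ^ 2; 3, q ^ 2 - 2]) * N =
        ((q + q⁻¹)⁻¹ • !![2 - q⁻¹ ^ 2, q ^ 2 - 1 + q⁻¹ ^ 2; 3, q ^ 2 - 2]) * N *
          ((q + q⁻¹)⁻¹ • !![2 - q⁻¹ ^ 2, q ^ 2 - 1 + q⁻¹ ^ 2; 3, q ^ 2 - 2]) ∧
      N * !![q, 0; 0, -q⁻¹] = !![q, 0; 0, -q⁻¹] * N := by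
  rintro ⟨N, hquad, hbraid, hcomm⟩
  obtain ⟨a, b, c, d, rfl⟩ : ∃ a b c d, N = !![a, b; c, d] :=
    ⟨N 0 0, N 0 1, N 1 0, N 1 1, by ext i j; fin_cases i <;> fin_cases j <;> rfl⟩
  have hqi : q * q⁻¹ = 1 := mul_inv_cancel₀ hq
  -- off-diagonal entries vanish
  have hb : b = 0 := by
    have h := congrFun (congrFun hcomm 0) 1
    simp [Matrix.mul_apply, Fin.sum_univ_two] at h
    have : b * (q + q⁻¹) = 0 := by linear_combination -h
    exact (mul_eq_zero.mp this).resolve_right hq1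
  have hc : c = 0 := by
    have h := congrFun (congrFun hcomm 1) 0
    simp [Matrix.mul_apply, Fin.sum_univ_two] at h
    have : c * (q + q⁻¹) = 0 := by linear_combination h
    exact (mul_eq_zero.mp this).resolve_right hq1
  subst hb hc
  -- quadratic relations for the diagonal entries
  have hqa : a * a = (q - q⁻¹) * a + 1 := by
    have h := congrFun (congrFun hquad 0) 0
    simp [Matrix.mul_apply, Fin.sum_univ_two, Matrix.one_apply] at h
    linear_combination h
  have hqd : d * d = (q - q⁻¹) * d + 1 := by
    have h := congrFun (congrFun hquad 1) 1
    simp [Matrix.mul_apply, Fin.sum_univ_two, Matrix.one_apply] at h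
    linear_combination h
  -- the (1,0) entry of the braid relation
  have h := congrFun (congrFun hbraid 1) 0
  simp [Matrix.mul_apply, Fin.sum_univ_two] at h
  rw [show (q ^ 2)⁻¹ = q⁻¹ ^ 2 from (inv_pow q 2).symm] at h
  have hs : (q + q⁻¹) * (q + q⁻¹)⁻¹ = 1 := mul_inv_cancel₀ hq1
  have key : (q + q⁻¹) * (a * d) = a * (2 - q⁻¹ ^ 2) + d * (q ^ 2 - 2) := by
    linear_combination ((q + q⁻¹) ^ 2 / 3) * h +
      (-2*d + 2*a - q⁻¹*a*d - 2*q⁻¹*(q+q⁻¹)⁻¹*d + 2*q⁻¹*(q+q⁻¹)⁻¹*a - q⁻¹^2*a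
        - q⁻¹^3*(q+q⁻¹)⁻¹*a - q*a*d - 2*q*(q+q⁻¹)⁻¹*d + 2*q*(q+q⁻¹)⁻¹*a
        - q*q⁻¹^2*(q+q⁻¹)⁻¹*a + q^2*d + q^2*q⁻¹*(q+q⁻¹)⁻¹*d + q^3*(q+q⁻¹)⁻¹*d) * hs
  -- a and d are each q or -q⁻¹
  have hafac : (a - q) * (a + q⁻¹) = 0 := by linear_combination hqa - hqi
  have hdfac : (d - q) * (d + q⁻¹) = 0 := by linear_combination hqd - hqi
  rcases mul_eq_zero.mp hafac with ha' | ha' <;> rcases mul_eq_zero.mp hdfac with hd' | hd'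
  · -- a = q, d = q
    have haq : a = q := by linear_combination ha'
    have hdq : d = q := by linear_combination hd'
    rw [haq, hdq] at key
    exact hq1 (by linear_combination key - (q + q⁻¹) * hqi)
  · -- a = q, d = -q⁻¹
    have haq : a = q := by linear_combination ha'
    have hdq : d = -q⁻¹ := by linear_combination hd'
    rw [haq, hdq] at key
    have h0 : (q + q⁻¹) * 2 = 0 := by linear_combination -key
    rcases mul_eq_zero.mp h0 with h' | h'
    · exact hq1 h'
    · exact two_ne_zero h'
  · -- a = -q⁻¹, d = q
    have haq : a = -q⁻¹ := by linear_combination ha'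
    have hdq : d = q := by linear_combination hd'
    rw [haq, hdq] at key
    have h3 : (q + q⁻¹) * ((q - q⁻¹) * (q - q⁻¹)) = 0 := by
      linear_combination -key - 2 * (q + q⁻¹) * hqi
    have h4 : (q - q⁻¹) * (q - q⁻¹) = 0 := (mul_eq_zero.mp h3).resolve_left hq1
    have h5 : q - q⁻¹ = 0 := by
      rcases mul_eq_zero.mp h4 with h' | h' <;> exact h'
    exact hq2 (by linear_combination q * h5 + hqi)
  · -- a = -q⁻¹, d = -q⁻¹
    have haq : a = -q⁻¹ := by linear_combination ha'
    have hdq : d = -q⁻¹ := by linear_combination hd'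
    rw [haq, hdq] at key
    exact hq1 (by linear_combination key - (q + q⁻¹) * hqi)
end
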